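/- arXiv:2307.16056 — 3 statements merged into one kernel-verified Lean document; each statement's English description precedes it below -/
import Mathlib

section
/- For every 4-cover 𝒜 = {A₁, A₂, A₃, A₄} of ℝ, the following conditions are equivalent: (1) H₄(𝒜) is non-archimedeanly quasi-metrizable; (2) H₄(𝒜) is quasi-metrizable; (3) there exist families {Fₙ : n ∈ ω} of subsets of A₃ and {Hₙ : n ∈ ω} of subsets of A₄ such that A₃ = ⋃ₙ Fₙ, A₄ = ⋃ₙ Hₙ, and for every n ∈ ω the closure of Fₙ in 𝕊← is contained in A₂ ∪ A₃ and the closure of Hₙ in 𝕊 is contained in A₂ ∪ A₄. -/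
open Set

/-- The Sorgenfrey topology on ℝ (generated by the intervals `[a, b)`). -/
def sorgenfreyTop : TopologicalSpace ℝ :=
  TopologicalSpace.generateFrom {S : Set ℝ | ∃ a b : ℝ, S = Set.Ico a b}

/-- The "left" Sorgenfrey topology on ℝ (generated by the intervals `(a, b]`). -/
def sorgenfreyLeftTop : TopologicalSpace ℝ :=
  TopologicalSpace.generateFrom {S : Set ℝ | ∃ a b : ℝ, S = Set.Ioc a b}

/-- `A₁, A₂, A₃, A₄` form a 4-cover of ℝ: pairwise disjoint with union ℝ. -/
def Is4Cover (A₁ A₂ A₃ A₄ : Set ℝ) : Prop :=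
  A₁ ∪ A₂ ∪ A₃ ∪ A₄ = Set.univ ∧
  Disjoint A₁ A₂ ∧ Disjoint A₁ A₃ ∧ Disjoint A₁ A₄ ∧
  Disjoint A₂ A₃ ∧ Disjoint A₂ A₄ ∧ Disjoint A₃ A₄

/-- The hybrid topology determined by a 4-cover: points of `A₁` have the usual
open intervals as a local base, points of `A₂` are isolated, points of `A₃`
have a local base of sets `[x, x+ε)`, and points of `A₄` of sets `(x-ε, x]`. -/
def hybridTop (A₁ A₂ A₃ A₄ : Set ℝ) : TopologicalSpace ℝ :=
  TopologicalSpace.generateFrom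
    ({S : Set ℝ | ∃ x ∈ A₁, ∃ ε : ℝ, 0 < ε ∧ S = Set.Ioo (x - ε) (x + ε)} ∪
     {S : Set ℝ | ∃ x ∈ A₂, S = {x}} ∪
     {S : Set ℝ | ∃ x ∈ A₃, ∃ ε : ℝ, 0 < ε ∧ S = Set.Ico x (x + ε)} ∪
     {S : Set ℝ | ∃ x ∈ A₄, ∃ ε : ℝ, 0 < ε ∧ S = Set.Ioc (x - ε) x})

/-- A quasi-metric: nonnegative, vanishing exactly on the diagonal,
satisfying the triangle inequality. -/
def IsQuasiMetric {X : Type*} (ρ : X → X → ℝ) : Prop :=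
  (∀ x y, 0 ≤ ρ x y) ∧ (∀ x y, ρ x y = 0 ↔ x = y) ∧
  (∀ x y z, ρ x y ≤ ρ x z + ρ z y)

/-- A non-archimedean quasi-metric. -/
def IsNAQuasiMetric {X : Type*} (ρ : X → X → ℝ) : Prop :=
  IsQuasiMetric ρ ∧ ∀ x y z, ρ x y ≤ max (ρ x z) (ρ z y)

/-- The topology induced by a quasi-metric: the balls `B_ρ(x, r)` form a base. -/
def quasiMetricTop {X : Type*} (ρ : X → X → ℝ) : TopologicalSpace X :=
  TopologicalSpace.generateFrom
    {B : Set X | ∃ x : X, ∃ r : ℝ, 0 < r ∧ B = {y : X | ρ x y < r}}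

/-- A topology is quasi-metrizable if it is induced by some quasi-metric. -/
def QuasiMetrizableTop {X : Type*} (t : TopologicalSpace X) : Prop :=
  ∃ ρ : X → X → ℝ, IsQuasiMetric ρ ∧ t = quasiMetricTop ρ

/-- A topology is non-archimedeanly quasi-metrizable if it is induced by some
non-archimedean quasi-metric. -/
def NAQuasiMetrizableTop {X : Type*} (t : TopologicalSpace X) : Prop :=
  ∃ ρ : X → X → ℝ, IsNAQuasiMetric ρ ∧ t = quasiMetricTop ρ


open Topology

/-! ### Generic helpers -/

lemma gen_open_of_pointwise {X : Type*} (g : Set (Set X)) (U : Set X)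
    (h : ∀ x ∈ U, ∃ V ∈ g, x ∈ V ∧ V ⊆ U) :
    IsOpen[TopologicalSpace.generateFrom g] U := by
  have hU : U = ⋃₀ {V | V ∈ g ∧ V ⊆ U} := by
    apply Set.Subset.antisymm
    · intro x hx
      obtain ⟨V, hVg, hxV, hVU⟩ := h x hx
      exact ⟨V, ⟨hVg, hVU⟩, hxV⟩
    · rintro x ⟨V, ⟨-, hVU⟩, hxV⟩
      exact hVU hxV
  rw [hU]
  exact TopologicalSpace.GenerateOpen.sUnion _
    (fun s hs => TopologicalSpace.GenerateOpen.basic s hs.1)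

lemma qmt_exists_ball {X : Type*} {ρ : X → X → ℝ} (hρ : IsQuasiMetric ρ)
    {U : Set X} (hU : IsOpen[quasiMetricTop ρ] U) :
    ∀ x ∈ U, ∃ r : ℝ, 0 < r ∧ {y | ρ x y < r} ⊆ U := by
  have hU' : TopologicalSpace.GenerateOpen
      {B : Set X | ∃ x : X, ∃ r : ℝ, 0 < r ∧ B = {y : X | ρ x y < r}} U := hU
  clear hU
  induction hU' with
  | basic s hs =>
    rintro x hx
    obtain ⟨c, r, hr, rfl⟩ := hs
    refine ⟨r - ρ c x, by simpa using hx, fun y hy => ?_⟩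
    simp only [mem_setOf_eq] at hy ⊢
    calc ρ c y ≤ ρ c x + ρ x y := hρ.2.2 c y x
      _ < ρ c x + (r - ρ c x) := by linarith
      _ = r := by ring
  | univ => exact fun x _ => ⟨1, one_pos, fun y _ => trivial⟩
  | inter s t _ _ ihs iht =>
    rintro x ⟨hxs, hxt⟩
    obtain ⟨r₁, hr₁, h₁⟩ := ihs x hxs
    obtain ⟨r₂, hr₂, h₂⟩ := iht x hxt
    refine ⟨min r₁ r₂, lt_min hr₁ hr₂, fun y hy => ?_⟩
    simp only [mem_setOf_eq] at hy
    exact ⟨h₁ (by simpa using lt_of_lt_of_le hy (min_le_left _ _)),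
           h₂ (by simpa using lt_of_lt_of_le hy (min_le_right _ _))⟩
  | sUnion S _ ih =>
    rintro x ⟨s, hsS, hxs⟩
    obtain ⟨r, hr, h⟩ := ih s hsS x hxs
    exact ⟨r, hr, fun y hy => ⟨s, hsS, h hy⟩⟩

/-! ### Dyadic grid -/

noncomputable def gpt (k : ℕ) (z : ℝ) : ℝ := (⌊z * 2 ^ k⌋ + 1) / 2 ^ k
noncomputable def gmt (k : ℕ) (z : ℝ) : ℝ := (⌈z * 2 ^ k⌉ - 1) / 2 ^ k

lemma two_pow_pos' (k : ℕ) : (0:ℝ) < 2 ^ k := by positivity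

lemma lt_gpt (k : ℕ) (z : ℝ) : z < gpt k z := by
  rw [gpt, lt_div_iff₀ (two_pow_pos' k)]
  have := Int.lt_floor_add_one (z * 2 ^ k)
  push_cast
  linarith

lemma gpt_le (k : ℕ) (z : ℝ) : gpt k z ≤ z + 1 / 2 ^ k := by
  rw [gpt, div_le_iff₀ (two_pow_pos' k)]
  have h1 := Int.floor_le (z * 2 ^ k)
  have h2 : (z + 1 / 2 ^ k) * 2 ^ k = z * 2 ^ k + 1 := by
    field_simp
  rw [h2]
  linarith

lemma gpt_mono {k : ℕ} {y z : ℝ} (h : y < gpt k z) : gpt k y ≤ gpt k z := by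
  rw [gpt, lt_div_iff₀ (two_pow_pos' k)] at h
  have h1 : (⌊y * 2 ^ k⌋ : ℝ) < ((⌊z * 2 ^ k⌋ : ℤ) : ℝ) + 1 := by
    have := Int.floor_le (y * 2 ^ k)
    linarith
  have h2 : ⌊y * 2 ^ k⌋ ≤ ⌊z * 2 ^ k⌋ := by
    have h3 : (⌊y * 2 ^ k⌋ : ℝ) < ((⌊z * 2 ^ k⌋ + 1 : ℤ) : ℝ) := by push_cast; linarith
    have h4 : ⌊y * 2 ^ k⌋ < ⌊z * 2 ^ k⌋ + 1 := by exact_mod_cast h3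
    omega
  rw [gpt, gpt, div_le_div_iff_of_pos_right (two_pow_pos' k)]
  have : (⌊y * 2 ^ k⌋ : ℝ) ≤ (⌊z * 2 ^ k⌋ : ℝ) := by exact_mod_cast h2
  linarith

lemma gmt_lt (k : ℕ) (z : ℝ) : gmt k z < z := by
  rw [gmt, div_lt_iff₀ (two_pow_pos' k)]
  have := Int.ceil_lt_add_one (z * 2 ^ k)
  push_cast
  linarith

lemma gmt_ge (k : ℕ) (z : ℝ) : z - 1 / 2 ^ k ≤ gmt k z := by
  rw [gmt, le_div_iff₀ (two_pow_pos' k)]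
  have h1 := Int.le_ceil (z * 2 ^ k)
  have h2 : (z - 1 / 2 ^ k) * 2 ^ k = z * 2 ^ k - 1 := by field_simp
  rw [h2]
  push_cast
  linarith

lemma gmt_mono {k : ℕ} {y z : ℝ} (h : gmt k z < y) : gmt k z ≤ gmt k y := by
  rw [gmt, div_lt_iff₀ (two_pow_pos' k)] at h
  have h2 : ⌈z * 2 ^ k⌉ - 1 < ⌈y * 2 ^ k⌉ := by
    rw [Int.lt_ceil]
    push_cast
    linarith
  have h3 : ⌈z * 2 ^ k⌉ - 1 ≤ ⌈y * 2 ^ k⌉ - 1 := by omega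
  rw [gmt, gmt, div_le_div_iff_of_pos_right (two_pow_pos' k)]
  have : ((⌈z * 2 ^ k⌉ : ℤ) : ℝ) ≤ ((⌈y * 2 ^ k⌉ : ℤ) : ℝ) := by exact_mod_cast (by omega : ⌈z * 2 ^ k⌉ ≤ ⌈y * 2 ^ k⌉)
  push_cast at this ⊢
  linarith

/-- Build a non-archimedean quasi-metric from a decreasing sequence of
transitive open neighbornets forming a neighborhood base. -/
lemma na_of_neighbornets {X : Type*} (t : TopologicalSpace X) (T : ℕ → X → Set X)
    (hrefl : ∀ k x, x ∈ T k x)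
    (htrans : ∀ k x y, y ∈ T k x → T k y ⊆ T k x)
    (hanti : ∀ k x, T (k+1) x ⊆ T k x)
    (hsep : ∀ x y, x ≠ y → ∃ k, y ∉ T k x)
    (hopen : ∀ k x, IsOpen[t] (T k x))
    (hbase : ∀ x U, IsOpen[t] U → x ∈ U → ∃ k, T k x ⊆ U) :
    ∃ ρ : X → X → ℝ, IsNAQuasiMetric ρ ∧ t = quasiMetricTop ρ := by
  classical
  have hantile : ∀ {j k : ℕ}, j ≤ k → ∀ x, T k x ⊆ T j x := by
    intro j k hjk
    induction hjk with
    | refl => exact fun x => le_refl _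
    | step h ih => exact fun x => (hanti _ x).trans (ih x)
  set ρ : X → X → ℝ := fun x y =>
    if h : ∃ k, y ∉ T k x then (1/2 : ℝ) ^ (Nat.find h) else 0 with hρdef
  have hρ : ∀ x y, ρ x y =
      if h : ∃ k, y ∉ T k x then (1/2 : ℝ) ^ (Nat.find h) else 0 := fun _ _ => rfl
  have hnonneg : ∀ x y, 0 ≤ ρ x y := by
    intro x y
    rw [hρ x y]
    split <;> positivity
  have hzero : ∀ x y, ρ x y = 0 ↔ x = y := by
    intro x y
    rw [hρ x y]
    by_cases h : ∃ k, y ∉ T k x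
    · rw [dif_pos h]
      constructor
      · intro h0
        exact absurd h0 (by positivity)
      · rintro rfl
        exact absurd (Nat.find_spec h) (by simpa using hrefl (Nat.find h) x)
    · rw [dif_neg h]
      push_neg at h
      constructor
      · intro _
        by_contra hxy
        obtain ⟨k, hk⟩ := hsep x y hxy
        exact hk (h k)
      · intro _; rfl
  have hmem : ∀ (x y : X) (h : ∃ k, y ∉ T k x) (k : ℕ), y ∈ T k x ↔ k < Nat.find h := by
    intro x y h k
    constructor
    · intro hy
      by_contra hk
      push_neg at hk
      exact (Nat.find_spec h) (hantile hk x hy)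
    · intro hk
      have := Nat.find_min h hk
      simpa using this
  have hmemle : ∀ (x y : X) (k : ℕ), y ∈ T k x → ρ x y ≤ (1/2:ℝ)^(k+1) := by
    intro x y k hy
    by_cases h : ∃ j, y ∉ T j x
    · rw [hρ x y, dif_pos h]
      have hk : k < Nat.find h := (hmem x y h k).mp hy
      exact pow_le_pow_of_le_one (by norm_num) (by norm_num) hk
    · rw [hρ x y, dif_neg h]; positivity
  have hgt : ∀ (x y : X) (k : ℕ), ρ x y < (1/2:ℝ)^k → y ∈ T k x := by
    intro x y k hy
    by_cases h : ∃ j, y ∉ T j x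
    · rw [hρ x y, dif_pos h] at hy
      have : k < Nat.find h := by
        by_contra hc
        push_neg at hc
        exact absurd (pow_le_pow_of_le_one (by norm_num) (by norm_num) hc)
          (not_le_of_gt hy)
      exact (hmem x y h k).mpr this
    · push_neg at h; exact h k
  have hpowlt : ∀ k : ℕ, (1/2:ℝ)^(k+1) < (1/2:ℝ)^k := by
    intro k
    rw [pow_succ]
    nlinarith [pow_pos (by norm_num : (0:ℝ) < 1/2) k]
  have hball : ∀ (x : X) (k : ℕ), {y | ρ x y < (1/2:ℝ)^k} = T k x := by
    intro x k
    ext y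
    simp only [mem_setOf_eq]
    exact ⟨hgt x y k, fun hy => lt_of_le_of_lt (hmemle x y k hy) (hpowlt k)⟩
  have hna : ∀ x y z, ρ x y ≤ max (ρ x z) (ρ z y) := by
    intro x y z
    by_cases h : ∃ k, y ∉ T k x
    · rw [hρ x y, dif_pos h]
      by_contra hlt
      push_neg at hlt
      set K := Nat.find h with hK
      have hxz : z ∈ T K x :=
        hgt x z K (lt_of_le_of_lt (le_max_left (ρ x z) (ρ z y)) hlt)
      have hzy : y ∈ T K z :=
        hgt z y K (lt_of_le_of_lt (le_max_right (ρ x z) (ρ z y)) hlt)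
      exact (Nat.find_spec h) (htrans K x z hxz hzy)
    · rw [hρ x y, dif_neg h]
      exact le_max_of_le_left (hnonneg x z)
  have htri : ∀ x y z, ρ x y ≤ ρ x z + ρ z y := by
    intro x y z
    refine (hna x y z).trans ?_
    rcases max_cases (ρ x z) (ρ z y) with ⟨he, _⟩ | ⟨he, _⟩ <;> rw [he]
    · linarith [hnonneg z y]
    · linarith [hnonneg x z]
  have hρle1 : ∀ x y, ρ x y ≤ 1 := by
    intro x y
    rw [hρ x y]
    split
    · exact pow_le_one₀ (by norm_num) (by norm_num)
    · norm_num
  have hballs : ∀ (x : X) (r : ℝ), 0 < r →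
      {y | ρ x y < r} = univ ∨ ∃ k, {y | ρ x y < r} = T k x := by
    intro x r hr
    by_cases hr1 : 1 < r
    · left
      ext y
      simp only [mem_setOf_eq, mem_univ, iff_true]
      exact lt_of_le_of_lt (hρle1 x y) hr1
    · right
      push_neg at hr1
      have hex : ∃ k, (1/2:ℝ)^(k+1) < r := by
        obtain ⟨k, hk⟩ := exists_pow_lt_of_lt_one hr (by norm_num : (1/2:ℝ) < 1)
        exact ⟨k, lt_of_le_of_lt (pow_le_pow_of_le_one (by norm_num) (by norm_num)
          (Nat.le_succ k)) hk⟩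
      set k := Nat.find hex with hkdef
      have hk1 : (1/2:ℝ)^(k+1) < r := Nat.find_spec hex
      have hk2 : r ≤ (1/2:ℝ)^k := by
        rcases Nat.eq_zero_or_pos k with hk0 | hk0
        · rw [hk0]; simpa using hr1
        · have hmin := Nat.find_min hex (Nat.sub_lt hk0 one_pos)
          push_neg at hmin
          have hkk : k - 1 + 1 = k := Nat.succ_pred_eq_of_pos hk0
          rwa [hkk] at hmin
      refine ⟨k, ?_⟩
      ext y
      simp only [mem_setOf_eq]
      constructor
      · intro hy
        exact hgt x y k (lt_of_lt_of_le hy hk2)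
      · intro hy
        exact lt_of_le_of_lt (hmemle x y k hy) hk1
  refine ⟨ρ, ⟨⟨hnonneg, hzero, htri⟩, hna⟩, ?_⟩
  apply TopologicalSpace.ext_iff.mpr
  intro U
  constructor
  · intro hU
    apply gen_open_of_pointwise
    intro x hx
    obtain ⟨k, hk⟩ := hbase x U hU hx
    exact ⟨T k x, ⟨x, (1/2:ℝ)^k, by positivity, (hball x k).symm⟩, hrefl k x, hk⟩
  · intro hU
    have hU' : TopologicalSpace.GenerateOpen
        {B : Set X | ∃ c : X, ∃ r : ℝ, 0 < r ∧ B = {y : X | ρ c y < r}} U := hU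
    clear hU
    induction hU' with
    | basic s hs =>
      obtain ⟨c, r, hr, rfl⟩ := hs
      rcases hballs c r hr with h | ⟨k, h⟩
      · rw [h]; exact t.isOpen_univ
      · rw [h]; exact hopen k c
    | univ => exact t.isOpen_univ
    | inter s s' _ _ ih ih' => exact t.isOpen_inter s s' ih ih'
    | sUnion S _ ih => exact t.isOpen_sUnion S ih

/-! ### Hybrid topology basics -/

section Hybrid

variable {A₁ A₂ A₃ A₄ : Set ℝ}

def hybGens (A₁ A₂ A₃ A₄ : Set ℝ) : Set (Set ℝ) :=
  ({S : Set ℝ | ∃ x ∈ A₁, ∃ ε : ℝ, 0 < ε ∧ S = Set.Ioo (x - ε) (x + ε)} ∪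
   {S : Set ℝ | ∃ x ∈ A₂, S = {x}} ∪
   {S : Set ℝ | ∃ x ∈ A₃, ∃ ε : ℝ, 0 < ε ∧ S = Set.Ico x (x + ε)} ∪
   {S : Set ℝ | ∃ x ∈ A₄, ∃ ε : ℝ, 0 < ε ∧ S = Set.Ioc (x - ε) x})

lemma hybridTop_eq : hybridTop A₁ A₂ A₃ A₄ =
    TopologicalSpace.generateFrom (hybGens A₁ A₂ A₃ A₄) := rfl

lemma mem_hybGens₁ {x ε : ℝ} (hx : x ∈ A₁) (hε : 0 < ε) :
    Ioo (x - ε) (x + ε) ∈ hybGens A₁ A₂ A₃ A₄ :=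
  Or.inl (Or.inl (Or.inl ⟨x, hx, ε, hε, rfl⟩))

lemma mem_hybGens₂ {x : ℝ} (hx : x ∈ A₂) : ({x} : Set ℝ) ∈ hybGens A₁ A₂ A₃ A₄ :=
  Or.inl (Or.inl (Or.inr ⟨x, hx, rfl⟩))

lemma mem_hybGens₃ {x ε : ℝ} (hx : x ∈ A₃) (hε : 0 < ε) :
    Ico x (x + ε) ∈ hybGens A₁ A₂ A₃ A₄ :=
  Or.inl (Or.inr ⟨x, hx, ε, hε, rfl⟩)

lemma mem_hybGens₄ {x ε : ℝ} (hx : x ∈ A₄) (hε : 0 < ε) :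
    Ioc (x - ε) x ∈ hybGens A₁ A₂ A₃ A₄ :=
  Or.inr ⟨x, hx, ε, hε, rfl⟩

lemma hyb_open_of_pointwise {U : Set ℝ}
    (h : ∀ x ∈ U, ∃ V ∈ hybGens A₁ A₂ A₃ A₄, x ∈ V ∧ V ⊆ U) :
    IsOpen[hybridTop A₁ A₂ A₃ A₄] U := by
  rw [hybridTop_eq]
  exact gen_open_of_pointwise _ _ h

/-- classification of points -/
lemma cover_cases (hcov : Is4Cover A₁ A₂ A₃ A₄) (x : ℝ) :
    x ∈ A₁ ∨ x ∈ A₂ ∨ x ∈ A₃ ∨ x ∈ A₄ := by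
  have hx : x ∈ A₁ ∪ A₂ ∪ A₃ ∪ A₄ := hcov.1 ▸ mem_univ x
  rcases hx with ((h | h) | h) | h
  · exact Or.inl h
  · exact Or.inr (Or.inl h)
  · exact Or.inr (Or.inr (Or.inl h))
  · exact Or.inr (Or.inr (Or.inr h))

lemma hyb_open_Ioo (hcov : Is4Cover A₁ A₂ A₃ A₄) (a b : ℝ) :
    IsOpen[hybridTop A₁ A₂ A₃ A₄] (Ioo a b) := by
  apply hyb_open_of_pointwise
  intro x hx
  obtain ⟨hax, hxb⟩ := hx
  rcases cover_cases hcov x with h | h | h | h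
  · have hm : 0 < min (x - a) (b - x) := lt_min (by linarith) (by linarith)
    refine ⟨Ioo (x - min (x - a) (b - x)) (x + min (x - a) (b - x)),
      mem_hybGens₁ h hm, ⟨by linarith, by linarith⟩, fun u hu => ?_⟩
    simp only [mem_Ioo] at hu ⊢
    have h1 := min_le_left (x - a) (b - x)
    have h2 := min_le_right (x - a) (b - x)
    constructor <;> linarith [hu.1, hu.2]
  · exact ⟨{x}, mem_hybGens₂ h, rfl, by simp [singleton_subset_iff]; exact ⟨hax, hxb⟩⟩
  · refine ⟨Ico x (x + (b - x)), mem_hybGens₃ h (by linarith), ?_, ?_⟩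
    · simp; linarith
    · intro u hu
      simp only [mem_Ico] at hu
      simp only [mem_Ioo]
      constructor <;> linarith [hu.1, hu.2]
  · refine ⟨Ioc (x - (x - a)) x, mem_hybGens₄ h (by linarith), ?_, ?_⟩
    · simp; linarith
    · intro u hu
      simp only [mem_Ioc] at hu
      simp only [mem_Ioo]
      constructor <;> linarith [hu.1, hu.2]

/-- Interior approximations: from an open set to a one/two-sided basic
neighborhood. -/
lemma hyb_nbhd (hcov : Is4Cover A₁ A₂ A₃ A₄) {U : Set ℝ}
    (hU : IsOpen[hybridTop A₁ A₂ A₃ A₄] U) :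
    ∀ x ∈ U, ∃ ε : ℝ, 0 < ε ∧ (x ∈ A₁ → Ioo (x - ε) (x + ε) ⊆ U) ∧
      (x ∈ A₃ → Ico x (x + ε) ⊆ U) ∧ (x ∈ A₄ → Ioc (x - ε) x ⊆ U) := by
  obtain ⟨-, d12, d13, d14, d23, d24, d34⟩ := hcov
  have hU' : TopologicalSpace.GenerateOpen (hybGens A₁ A₂ A₃ A₄) U := hU
  clear hU
  have master : ∀ (x ε : ℝ) (G : Set ℝ), 0 < ε → Ioo (x - ε) (x + ε) ⊆ G →
      (x ∈ A₁ → Ioo (x - ε) (x + ε) ⊆ G) ∧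
      (x ∈ A₃ → Ico x (x + ε) ⊆ G) ∧ (x ∈ A₄ → Ioc (x - ε) x ⊆ G) := by
    intro x ε G hε hsub
    refine ⟨fun _ => hsub, fun _ => ?_, fun _ => ?_⟩
    · exact fun u hu => hsub ⟨by linarith [hu.1], hu.2⟩
    · exact fun u hu => hsub ⟨hu.1, by linarith [hu.2]⟩
  induction hU' with
  | basic s hs =>
    intro x hx
    rcases hs with ((⟨c, hc, e, he, rfl⟩ | ⟨c, hc, rfl⟩) | ⟨c, hc, e, he, rfl⟩) |
      ⟨c, hc, e, he, rfl⟩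
    · obtain ⟨h1, h2⟩ := hx
      set ε := min (x - (c - e)) ((c + e) - x) with hε
      have hεpos : 0 < ε := by apply lt_min <;> linarith
      have hsub : Ioo (x - ε) (x + ε) ⊆ Ioo (c - e) (c + e) := by
        intro u hu
        have g1 := min_le_left (x - (c - e)) ((c + e) - x)
        have g2 := min_le_right (x - (c - e)) ((c + e) - x)
        exact ⟨by linarith [hu.1], by linarith [hu.2]⟩
      exact ⟨ε, hεpos, master x ε _ hεpos hsub⟩
    · rw [mem_singleton_iff] at hx
      subst hx
      refine ⟨1, one_pos, ?_, ?_, ?_⟩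
      · intro h1; exact absurd hc (disjoint_left.mp d12 h1)
      · intro h3; exact absurd h3 (disjoint_left.mp d23 hc)
      · intro h4; exact absurd h4 (disjoint_left.mp d24 hc)
    · obtain ⟨h1, h2⟩ := hx
      by_cases hxc : x = c
      · subst hxc
        refine ⟨e, he, ?_, ?_, ?_⟩
        · intro hA1; exact absurd hc (disjoint_left.mp d13 hA1)
        · intro _; exact fun u hu => hu
        · intro hA4; exact absurd hA4 (disjoint_left.mp d34 hc)
      · have hcx : c < x := lt_of_le_of_ne h1 (Ne.symm hxc)
        set ε := min (x - c) ((c + e) - x) with hε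
        have hεpos : 0 < ε := by apply lt_min <;> linarith
        have hsub : Ioo (x - ε) (x + ε) ⊆ Ico c (c + e) := by
          intro u hu
          have g1 := min_le_left (x - c) ((c + e) - x)
          have g2 := min_le_right (x - c) ((c + e) - x)
          exact ⟨by linarith [hu.1], by linarith [hu.2]⟩
        exact ⟨ε, hεpos, master x ε _ hεpos hsub⟩
    · obtain ⟨h1, h2⟩ := hx
      by_cases hxc : x = c
      · subst hxc
        refine ⟨e, he, ?_, ?_, ?_⟩
        · intro hA1; exact absurd hc (disjoint_left.mp d14 hA1)
        · intro hA3; exact absurd hc (disjoint_left.mp d34 hA3)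
        · intro _; exact fun u hu => hu
      · have hcx : x < c := lt_of_le_of_ne h2 hxc
        set ε := min (x - (c - e)) (c - x) with hε
        have hεpos : 0 < ε := by apply lt_min <;> linarith
        have hsub : Ioo (x - ε) (x + ε) ⊆ Ioc (c - e) c := by
          intro u hu
          have g1 := min_le_left (x - (c - e)) (c - x)
          have g2 := min_le_right (x - (c - e)) (c - x)
          exact ⟨by linarith [hu.1], by linarith [hu.2]⟩
        exact ⟨ε, hεpos, master x ε _ hεpos hsub⟩
  | univ =>
    intro x _
    exact ⟨1, one_pos, fun _ => subset_univ _, fun _ => subset_univ _,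
      fun _ => subset_univ _⟩
  | inter s s' _ _ ih ih' =>
    rintro x ⟨hxs, hxs'⟩
    obtain ⟨ε₁, hε₁, h₁, h₂, h₃⟩ := ih x hxs
    obtain ⟨ε₂, hε₂, g₁, g₂, g₃⟩ := ih' x hxs'
    have l1 := min_le_left ε₁ ε₂
    have l2 := min_le_right ε₁ ε₂
    refine ⟨min ε₁ ε₂, lt_min hε₁ hε₂, ?_, ?_, ?_⟩
    · intro hA
      exact fun u hu => ⟨h₁ hA ⟨by linarith [hu.1], by linarith [hu.2]⟩,
        g₁ hA ⟨by linarith [hu.1], by linarith [hu.2]⟩⟩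
    · intro hA
      exact fun u hu => ⟨h₂ hA ⟨hu.1, by linarith [hu.2]⟩,
        g₂ hA ⟨hu.1, by linarith [hu.2]⟩⟩
    · intro hA
      exact fun u hu => ⟨h₃ hA ⟨by linarith [hu.1], hu.2⟩,
        g₃ hA ⟨by linarith [hu.1], hu.2⟩⟩
  | sUnion S _ ih =>
    rintro x ⟨s, hsS, hxs⟩
    obtain ⟨ε, hε, h₁, h₂, h₃⟩ := ih s hsS x hxs
    exact ⟨ε, hε, fun hA => (h₁ hA).trans (subset_sUnion_of_mem hsS),
      fun hA => (h₂ hA).trans (subset_sUnion_of_mem hsS),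
      fun hA => (h₃ hA).trans (subset_sUnion_of_mem hsS)⟩

end Hybrid

/-! ### Sorgenfrey lemmas -/

lemma sleft_nbhd {U : Set ℝ} (hU : IsOpen[sorgenfreyLeftTop] U) :
    ∀ x ∈ U, ∃ ε : ℝ, 0 < ε ∧ Ioc (x - ε) x ⊆ U := by
  have hU' : TopologicalSpace.GenerateOpen {S : Set ℝ | ∃ a b : ℝ, S = Set.Ioc a b} U := hU
  clear hU
  induction hU' with
  | basic s hs =>
    intro x hx
    obtain ⟨a, b, rfl⟩ := hs
    refine ⟨x - a, by linarith [hx.1], fun u hu => ⟨by linarith [hu.1], le_trans hu.2 hx.2⟩⟩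
  | univ => exact fun x _ => ⟨1, one_pos, subset_univ _⟩
  | inter s s' _ _ ih ih' =>
    rintro x ⟨hxs, hxs'⟩
    obtain ⟨ε₁, hε₁, h₁⟩ := ih x hxs
    obtain ⟨ε₂, hε₂, h₂⟩ := ih' x hxs'
    have l1 := min_le_left ε₁ ε₂
    have l2 := min_le_right ε₁ ε₂
    exact ⟨min ε₁ ε₂, lt_min hε₁ hε₂,
      fun u hu => ⟨h₁ ⟨by linarith [hu.1], hu.2⟩, h₂ ⟨by linarith [hu.1], hu.2⟩⟩⟩
  | sUnion S _ ih =>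
    rintro x ⟨s, hsS, hxs⟩
    obtain ⟨ε, hε, h⟩ := ih s hsS x hxs
    exact ⟨ε, hε, h.trans (subset_sUnion_of_mem hsS)⟩

lemma sright_nbhd {U : Set ℝ} (hU : IsOpen[sorgenfreyTop] U) :
    ∀ x ∈ U, ∃ ε : ℝ, 0 < ε ∧ Ico x (x + ε) ⊆ U := by
  have hU' : TopologicalSpace.GenerateOpen {S : Set ℝ | ∃ a b : ℝ, S = Set.Ico a b} U := hU
  clear hU
  induction hU' with
  | basic s hs =>
    intro x hx
    obtain ⟨a, b, rfl⟩ := hs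
    refine ⟨b - x, by linarith [hx.2], fun u hu => ⟨le_trans hx.1 hu.1, by linarith [hu.2]⟩⟩
  | univ => exact fun x _ => ⟨1, one_pos, subset_univ _⟩
  | inter s s' _ _ ih ih' =>
    rintro x ⟨hxs, hxs'⟩
    obtain ⟨ε₁, hε₁, h₁⟩ := ih x hxs
    obtain ⟨ε₂, hε₂, h₂⟩ := ih' x hxs'
    have l1 := min_le_left ε₁ ε₂
    have l2 := min_le_right ε₁ ε₂
    exact ⟨min ε₁ ε₂, lt_min hε₁ hε₂,
      fun u hu => ⟨h₁ ⟨hu.1, by linarith [hu.2]⟩, h₂ ⟨hu.1, by linarith [hu.2]⟩⟩⟩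
  | sUnion S _ ih =>
    rintro x ⟨s, hsS, hxs⟩
    obtain ⟨ε, hε, h⟩ := ih s hsS x hxs
    exact ⟨ε, hε, h.trans (subset_sUnion_of_mem hsS)⟩

lemma sleft_open_Ioc (a b : ℝ) : IsOpen[sorgenfreyLeftTop] (Ioc a b) :=
  TopologicalSpace.isOpen_generateFrom_of_mem ⟨a, b, rfl⟩

lemma sright_open_Ico (a b : ℝ) : IsOpen[sorgenfreyTop] (Ico a b) :=
  TopologicalSpace.isOpen_generateFrom_of_mem ⟨a, b, rfl⟩

lemma sleft_closure_mem {S : Set ℝ} {y : ℝ}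
    (hy : y ∈ @closure ℝ sorgenfreyLeftTop S) {ε : ℝ} (hε : 0 < ε) :
    (Ioc (y - ε) y ∩ S).Nonempty := by
  letI : TopologicalSpace ℝ := sorgenfreyLeftTop
  exact mem_closure_iff.mp hy _ (sleft_open_Ioc _ _) ⟨by linarith, le_refl y⟩

lemma sright_closure_mem {S : Set ℝ} {y : ℝ}
    (hy : y ∈ @closure ℝ sorgenfreyTop S) {ε : ℝ} (hε : 0 < ε) :
    (Ico y (y + ε) ∩ S).Nonempty := by
  letI : TopologicalSpace ℝ := sorgenfreyTop
  exact mem_closure_iff.mp hy _ (sright_open_Ico _ _) ⟨le_refl y, by linarith⟩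

lemma sleft_gap {S : Set ℝ} {z : ℝ} (hz : z ∉ @closure ℝ sorgenfreyLeftTop S) :
    ∃ ε : ℝ, 0 < ε ∧ Ioc (z - ε) z ∩ @closure ℝ sorgenfreyLeftTop S = ∅ := by
  have hop : IsOpen[sorgenfreyLeftTop] (@closure ℝ sorgenfreyLeftTop S)ᶜ := by
    letI : TopologicalSpace ℝ := sorgenfreyLeftTop
    exact isClosed_closure.isOpen_compl
  obtain ⟨ε, hε, h⟩ := sleft_nbhd hop z hz
  refine ⟨ε, hε, eq_empty_iff_forall_notMem.mpr ?_⟩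
  rintro u ⟨hu1, hu2⟩
  exact (h hu1) hu2

lemma sright_gap {S : Set ℝ} {z : ℝ} (hz : z ∉ @closure ℝ sorgenfreyTop S) :
    ∃ ε : ℝ, 0 < ε ∧ Ico z (z + ε) ∩ @closure ℝ sorgenfreyTop S = ∅ := by
  have hop : IsOpen[sorgenfreyTop] (@closure ℝ sorgenfreyTop S)ᶜ := by
    letI : TopologicalSpace ℝ := sorgenfreyTop
    exact isClosed_closure.isOpen_compl
  obtain ⟨ε, hε, h⟩ := sright_nbhd hop z hz
  refine ⟨ε, hε, eq_empty_iff_forall_notMem.mpr ?_⟩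
  rintro u ⟨hu1, hu2⟩
  exact (h hu1) hu2

/-! ### Direction (2) → (3) -/

lemma dir_two_three {A₁ A₂ A₃ A₄ : Set ℝ} (hcov : Is4Cover A₁ A₂ A₃ A₄)
    (h2 : QuasiMetrizableTop (hybridTop A₁ A₂ A₃ A₄)) :
    (∃ F : ℕ → Set ℝ, (∀ n, F n ⊆ A₃) ∧ A₃ = ⋃ n, F n ∧
        ∀ n, @closure ℝ sorgenfreyLeftTop (F n) ⊆ A₂ ∪ A₃) ∧
    (∃ H : ℕ → Set ℝ, (∀ n, H n ⊆ A₄) ∧ A₄ = ⋃ n, H n ∧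
        ∀ n, @closure ℝ sorgenfreyTop (H n) ⊆ A₂ ∪ A₄) := by
  obtain ⟨ρ, hρ, hq⟩ := h2
  have hρ0 : ∀ x, ρ x x = 0 := fun x => (hρ.2.1 x x).mpr rfl
  have hpow2 : ∀ n : ℕ, (1/2:ℝ)^(n+1) + (1/2:ℝ)^(n+1) = (1/2:ℝ)^n := by
    intro n; rw [pow_succ]; ring
  have hballopen : ∀ (c : ℝ) (r : ℝ), 0 < r →
      IsOpen[hybridTop A₁ A₂ A₃ A₄] {y | ρ c y < r} := by
    intro c r hr
    rw [hq]
    exact TopologicalSpace.isOpen_generateFrom_of_mem ⟨c, r, hr, rfl⟩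
  constructor
  · -- the F family
    set P : ℕ → ℕ → Set ℝ := fun n m =>
      {x | x ∈ A₃ ∧ (∀ y, ρ x y < (1/2:ℝ)^n → x ≤ y) ∧
        (∀ y, x ≤ y → y < x + (1/2:ℝ)^m → ρ x y < (1/2:ℝ)^(n+1))} with hP
    refine ⟨fun p => P (Nat.unpair p).1 (Nat.unpair p).2,
      fun p x hx => hx.1, ?_, ?_⟩
    · apply Set.Subset.antisymm
      · intro x hx
        -- find n
        have hIco : IsOpen[quasiMetricTop ρ] (Ico x (x + 1)) := by
          rw [← hq]
          exact TopologicalSpace.isOpen_generateFrom_of_mem (mem_hybGens₃ hx one_pos)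
        obtain ⟨r, hr, hball⟩ := qmt_exists_ball hρ hIco x ⟨le_refl x, by linarith⟩
        obtain ⟨n, hn⟩ := exists_pow_lt_of_lt_one hr (by norm_num : (1/2:ℝ) < 1)
        have cond1 : ∀ y, ρ x y < (1/2:ℝ)^n → x ≤ y := by
          intro y hy
          exact (hball (show ρ x y < r from lt_trans hy hn)).1
        -- find m
        have hb2 : IsOpen[hybridTop A₁ A₂ A₃ A₄] {y | ρ x y < (1/2:ℝ)^(n+1)} :=
          hballopen x _ (by positivity)
        obtain ⟨ε, hε, -, h3, -⟩ := hyb_nbhd hcov hb2 x (by show ρ x x < _; rw [hρ0]; positivity)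
        obtain ⟨m, hm⟩ := exists_pow_lt_of_lt_one hε (by norm_num : (1/2:ℝ) < 1)
        have cond2 : ∀ y, x ≤ y → y < x + (1/2:ℝ)^m → ρ x y < (1/2:ℝ)^(n+1) := by
          intro y hy1 hy2
          exact h3 hx ⟨hy1, by linarith⟩
        refine mem_iUnion.mpr ⟨Nat.pair n m, ?_⟩
        simp only [Nat.unpair_pair]
        exact ⟨hx, cond1, cond2⟩
      · exact iUnion_subset (fun p x hx => hx.1)
    · intro p y hy
      by_contra hy2
      have hy14 : y ∈ A₁ ∨ y ∈ A₄ := by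
        rcases cover_cases hcov y with h | h | h | h
        · exact Or.inl h
        · exact absurd (Or.inl h) hy2
        · exact absurd (Or.inr h) hy2
        · exact Or.inr h
      set n := (Nat.unpair p).1
      set m := (Nat.unpair p).2
      have hb2 : IsOpen[hybridTop A₁ A₂ A₃ A₄] {w | ρ y w < (1/2:ℝ)^(n+1)} :=
        hballopen y _ (by positivity)
      obtain ⟨δ, hδ, c1, -, c4⟩ := hyb_nbhd hcov hb2 y (by show ρ y y < _; rw [hρ0]; positivity)
      have hIoc : Ioc (y - δ) y ⊆ {w | ρ y w < (1/2:ℝ)^(n+1)} := by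
        rcases hy14 with h | h
        · exact fun u hu => c1 h ⟨hu.1, by linarith [hu.2]⟩
        · exact c4 h
      have hmin : (0:ℝ) < min δ ((1/2:ℝ)^m) := lt_min hδ (by positivity)
      obtain ⟨x, hxI, hxP⟩ := sleft_closure_mem hy hmin
      obtain ⟨hx3, cond1, cond2⟩ := hxP
      have hne : x ≠ y := by
        intro h
        subst h
        rcases hy14 with h | h
        · exact absurd hx3 (disjoint_left.mp hcov.2.2.1 h)
        · exact absurd hx3 (fun hh => disjoint_left.mp hcov.2.2.2.2.2.2 hh h)
      have hxy : x < y := lt_of_le_of_ne hxI.2 hne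
      have hρxy : ρ x y < (1/2:ℝ)^(n+1) := by
        apply cond2 y (le_of_lt hxy)
        have := hxI.1
        have hminle : min δ ((1/2:ℝ)^m) ≤ (1/2:ℝ)^m := min_le_right _ _
        linarith
      have hyδx : y - δ < x := by
        have := hxI.1
        have hminle : min δ ((1/2:ℝ)^m) ≤ δ := min_le_left _ _
        linarith
      set w := ((y - δ) + x) / 2 with hw
      have hw1 : y - δ < w := by rw [hw]; linarith
      have hw2 : w < x := by rw [hw]; linarith
      have hwy : w ≤ y := by linarith
      have hρyw : ρ y w < (1/2:ℝ)^(n+1) := hIoc ⟨hw1, hwy⟩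
      have : ρ x w < (1/2:ℝ)^n := by
        calc ρ x w ≤ ρ x y + ρ y w := hρ.2.2 x w y
          _ < (1/2:ℝ)^(n+1) + (1/2:ℝ)^(n+1) := by linarith
          _ = (1/2:ℝ)^n := hpow2 n
      exact absurd (cond1 w this) (not_le_of_gt hw2)
  · -- the H family
    set P : ℕ → ℕ → Set ℝ := fun n m =>
      {x | x ∈ A₄ ∧ (∀ y, ρ x y < (1/2:ℝ)^n → y ≤ x) ∧
        (∀ y, y ≤ x → x - (1/2:ℝ)^m < y → ρ x y < (1/2:ℝ)^(n+1))} with hP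
    refine ⟨fun p => P (Nat.unpair p).1 (Nat.unpair p).2,
      fun p x hx => hx.1, ?_, ?_⟩
    · apply Set.Subset.antisymm
      · intro x hx
        have hIoc : IsOpen[quasiMetricTop ρ] (Ioc (x - 1) x) := by
          rw [← hq]
          exact TopologicalSpace.isOpen_generateFrom_of_mem (mem_hybGens₄ hx one_pos)
        obtain ⟨r, hr, hball⟩ := qmt_exists_ball hρ hIoc x ⟨by linarith, le_refl x⟩
        obtain ⟨n, hn⟩ := exists_pow_lt_of_lt_one hr (by norm_num : (1/2:ℝ) < 1)
        have cond1 : ∀ y, ρ x y < (1/2:ℝ)^n → y ≤ x := by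
          intro y hy
          exact (hball (show ρ x y < r from lt_trans hy hn)).2
        have hb2 : IsOpen[hybridTop A₁ A₂ A₃ A₄] {y | ρ x y < (1/2:ℝ)^(n+1)} :=
          hballopen x _ (by positivity)
        obtain ⟨ε, hε, -, -, h4⟩ := hyb_nbhd hcov hb2 x (by show ρ x x < _; rw [hρ0]; positivity)
        obtain ⟨m, hm⟩ := exists_pow_lt_of_lt_one hε (by norm_num : (1/2:ℝ) < 1)
        have cond2 : ∀ y, y ≤ x → x - (1/2:ℝ)^m < y → ρ x y < (1/2:ℝ)^(n+1) := by
          intro y hy1 hy2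
          exact h4 hx ⟨by linarith, hy1⟩
        refine mem_iUnion.mpr ⟨Nat.pair n m, ?_⟩
        simp only [Nat.unpair_pair]
        exact ⟨hx, cond1, cond2⟩
      · exact iUnion_subset (fun p x hx => hx.1)
    · intro p y hy
      by_contra hy2
      have hy13 : y ∈ A₁ ∨ y ∈ A₃ := by
        rcases cover_cases hcov y with h | h | h | h
        · exact Or.inl h
        · exact absurd (Or.inl h) hy2
        · exact Or.inr h
        · exact absurd (Or.inr h) hy2
      set n := (Nat.unpair p).1
      set m := (Nat.unpair p).2
      have hb2 : IsOpen[hybridTop A₁ A₂ A₃ A₄] {w | ρ y w < (1/2:ℝ)^(n+1)} :=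
        hballopen y _ (by positivity)
      obtain ⟨δ, hδ, c1, c3, -⟩ := hyb_nbhd hcov hb2 y (by show ρ y y < _; rw [hρ0]; positivity)
      have hIco : Ico y (y + δ) ⊆ {w | ρ y w < (1/2:ℝ)^(n+1)} := by
        rcases hy13 with h | h
        · exact fun u hu => c1 h ⟨by linarith [hu.1], hu.2⟩
        · exact c3 h
      have hmin : (0:ℝ) < min δ ((1/2:ℝ)^m) := lt_min hδ (by positivity)
      obtain ⟨x, hxI, hxP⟩ := sright_closure_mem hy hmin
      obtain ⟨hx4, cond1, cond2⟩ := hxP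
      have hne : x ≠ y := by
        intro h
        subst h
        rcases hy13 with h | h
        · exact absurd hx4 (fun hh => disjoint_left.mp hcov.2.2.2.1 h hh)
        · exact absurd hx4 (fun hh => disjoint_left.mp hcov.2.2.2.2.2.2 h hh)
      have hxy : y < x := lt_of_le_of_ne hxI.1 (Ne.symm hne)
      have hρxy : ρ x y < (1/2:ℝ)^(n+1) := by
        apply cond2 y (le_of_lt hxy)
        have := hxI.2
        have hminle : min δ ((1/2:ℝ)^m) ≤ (1/2:ℝ)^m := min_le_right _ _
        linarith
      have hyδx : x < y + δ := by
        have := hxI.2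
        have hminle : min δ ((1/2:ℝ)^m) ≤ δ := min_le_left _ _
        linarith
      set w := (x + (y + δ)) / 2 with hw
      have hw1 : w < y + δ := by rw [hw]; linarith
      have hw2 : x < w := by rw [hw]; linarith
      have hwy : y ≤ w := by linarith
      have hρyw : ρ y w < (1/2:ℝ)^(n+1) := hIco ⟨hwy, hw1⟩
      have : ρ x w < (1/2:ℝ)^n := by
        calc ρ x w ≤ ρ x y + ρ y w := hρ.2.2 x w y
          _ < (1/2:ℝ)^(n+1) + (1/2:ℝ)^(n+1) := by linarith
          _ = (1/2:ℝ)^n := hpow2 n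
      exact absurd (cond1 w this) (not_le_of_gt hw2)

/-! ### Neighbornets for the construction (3) → (1) -/

open Classical in
noncomputable def Wm (B : Set ℝ) (k : ℕ) (z : ℝ) : Set ℝ :=
  if z ∈ B then {z} else Ioo (gmt k z) (gpt k z)

open Classical in
noncomputable def Wr (C : Set ℝ) (k : ℕ) (z : ℝ) : Set ℝ :=
  if z ∈ C then Ico z (gpt k z)
  else {w | gmt k z < w ∧ w < gpt k z ∧ Ioc w z ∩ C = ∅}

open Classical in
noncomputable def Wl (C : Set ℝ) (k : ℕ) (z : ℝ) : Set ℝ :=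
  if z ∈ C then Ioc (gmt k z) z
  else {w | gmt k z < w ∧ w < gpt k z ∧ Ico z w ∩ C = ∅}

lemma Wm_refl (B : Set ℝ) (k : ℕ) (z : ℝ) : z ∈ Wm B k z := by
  rw [Wm]; split
  · exact rfl
  · exact ⟨gmt_lt k z, lt_gpt k z⟩

lemma Wr_refl (C : Set ℝ) (k : ℕ) (z : ℝ) : z ∈ Wr C k z := by
  rw [Wr]; split
  · exact ⟨le_refl z, lt_gpt k z⟩
  · exact ⟨gmt_lt k z, lt_gpt k z, by rw [Set.Ioc_self, empty_inter]⟩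

lemma Wl_refl (C : Set ℝ) (k : ℕ) (z : ℝ) : z ∈ Wl C k z := by
  rw [Wl]; split
  · exact ⟨gmt_lt k z, le_refl z⟩
  · exact ⟨gmt_lt k z, lt_gpt k z, by rw [Set.Ico_self, empty_inter]⟩

lemma Wm_small {B : Set ℝ} {k : ℕ} {z : ℝ} :
    Wm B k z ⊆ Ioo (z - 1 / 2 ^ k) (z + 1 / 2 ^ k) := by
  rw [Wm]; split
  · intro u hu
    rw [mem_singleton_iff] at hu
    subst hu
    have := two_pow_pos' k
    constructor <;> simp <;> positivity
  · intro u hu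
    exact ⟨lt_of_le_of_lt (gmt_ge k z) hu.1, lt_of_lt_of_le hu.2 (gpt_le k z)⟩

lemma Wm_trans {B : Set ℝ} {k : ℕ} {z y : ℝ} (hy : y ∈ Wm B k z) :
    Wm B k y ⊆ Wm B k z := by
  rw [Wm] at hy
  by_cases hz : z ∈ B
  · rw [if_pos hz] at hy
    rw [mem_singleton_iff] at hy
    subst hy
    exact le_refl _
  · rw [if_neg hz] at hy
    intro u hu
    rw [Wm] at hu
    rw [Wm, if_neg hz]
    by_cases hyB : y ∈ B
    · rw [if_pos hyB, mem_singleton_iff] at hu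
      subst hu
      exact hy
    · rw [if_neg hyB] at hu
      exact ⟨lt_of_le_of_lt (gmt_mono hy.1) hu.1, lt_of_lt_of_le hu.2 (gpt_mono hy.2)⟩

lemma Wr_trans {C : Set ℝ} {k : ℕ} {z y : ℝ} (hy : y ∈ Wr C k z) :
    Wr C k y ⊆ Wr C k z := by
  intro u hu
  rw [Wr] at hy hu ⊢
  by_cases hz : z ∈ C <;> by_cases hyC : y ∈ C
  · rw [if_pos hz] at hy ⊢
    rw [if_pos hyC] at hu
    exact ⟨le_trans hy.1 hu.1, lt_of_lt_of_le hu.2 (gpt_mono hy.2)⟩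
  · rw [if_pos hz] at hy ⊢
    rw [if_neg hyC] at hu
    obtain ⟨hu1, hu2, hu3⟩ := hu
    refine ⟨?_, lt_of_lt_of_le hu2 (gpt_mono hy.2)⟩
    by_contra hc
    push_neg at hc
    have hmem : z ∈ Ioc u y ∩ C := ⟨⟨hc, hy.1⟩, hz⟩
    rw [hu3] at hmem
    exact hmem
  · rw [if_neg hz] at hy ⊢
    rw [if_pos hyC] at hu
    obtain ⟨hy1, hy2, hy3⟩ := hy
    refine ⟨lt_of_lt_of_le hy1 hu.1, lt_of_lt_of_le hu.2 (gpt_mono hy2), ?_⟩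
    apply eq_empty_iff_forall_notMem.mpr
    rintro c ⟨⟨hc1, hc2⟩, hcC⟩
    have hmem : c ∈ Ioc y z ∩ C := ⟨⟨lt_of_le_of_lt hu.1 hc1, hc2⟩, hcC⟩
    rw [hy3] at hmem
    exact hmem
  · rw [if_neg hz] at hy ⊢
    rw [if_neg hyC] at hu
    obtain ⟨hy1, hy2, hy3⟩ := hy
    obtain ⟨hu1, hu2, hu3⟩ := hu
    refine ⟨lt_of_le_of_lt (gmt_mono hy1) hu1, lt_of_lt_of_le hu2 (gpt_mono hy2), ?_⟩
    apply eq_empty_iff_forall_notMem.mpr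
    rintro c ⟨⟨hc1, hc2⟩, hcC⟩
    by_cases hcy : c ≤ y
    · have hmem : c ∈ Ioc u y ∩ C := ⟨⟨hc1, hcy⟩, hcC⟩
      rw [hu3] at hmem
      exact hmem
    · push_neg at hcy
      have hmem : c ∈ Ioc y z ∩ C := ⟨⟨hcy, hc2⟩, hcC⟩
      rw [hy3] at hmem
      exact hmem

lemma Wl_trans {C : Set ℝ} {k : ℕ} {z y : ℝ} (hy : y ∈ Wl C k z) :
    Wl C k y ⊆ Wl C k z := by
  intro u hu
  rw [Wl] at hy hu ⊢
  by_cases hz : z ∈ C <;> by_cases hyC : y ∈ C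
  · rw [if_pos hz] at hy ⊢
    rw [if_pos hyC] at hu
    exact ⟨lt_of_le_of_lt (gmt_mono hy.1) hu.1, le_trans hu.2 hy.2⟩
  · rw [if_pos hz] at hy ⊢
    rw [if_neg hyC] at hu
    obtain ⟨hu1, hu2, hu3⟩ := hu
    refine ⟨lt_of_le_of_lt (gmt_mono hy.1) hu1, ?_⟩
    by_contra hc
    push_neg at hc
    have hmem : z ∈ Ico y u ∩ C := ⟨⟨hy.2, hc⟩, hz⟩
    rw [hu3] at hmem
    exact hmem
  · rw [if_neg hz] at hy ⊢
    rw [if_pos hyC] at hu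
    obtain ⟨hy1, hy2, hy3⟩ := hy
    refine ⟨lt_of_le_of_lt (gmt_mono hy1) hu.1, lt_of_le_of_lt hu.2 hy2, ?_⟩
    apply eq_empty_iff_forall_notMem.mpr
    rintro c ⟨⟨hc1, hc2⟩, hcC⟩
    have hmem : c ∈ Ico z y ∩ C := ⟨⟨hc1, lt_of_lt_of_le hc2 hu.2⟩, hcC⟩
    rw [hy3] at hmem
    exact hmem
  · rw [if_neg hz] at hy ⊢
    rw [if_neg hyC] at hu
    obtain ⟨hy1, hy2, hy3⟩ := hy
    obtain ⟨hu1, hu2, hu3⟩ := hu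
    refine ⟨lt_of_le_of_lt (gmt_mono hy1) hu1, lt_of_lt_of_le hu2 (gpt_mono hy2), ?_⟩
    apply eq_empty_iff_forall_notMem.mpr
    rintro c ⟨⟨hc1, hc2⟩, hcC⟩
    by_cases hcy : y ≤ c
    · have hmem : c ∈ Ico y u ∩ C := ⟨⟨hcy, hc2⟩, hcC⟩
      rw [hu3] at hmem
      exact hmem
    · push_neg at hcy
      have hmem : c ∈ Ico z y ∩ C := ⟨⟨hc1, hcy⟩, hcC⟩
      rw [hy3] at hmem
      exact hmem

/-! ### Openness of the neighbornets -/

section Openness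

variable {A₁ A₂ A₃ A₄ : Set ℝ}

lemma hyb_open_gen {V : Set ℝ} (h : V ∈ hybGens A₁ A₂ A₃ A₄) :
    IsOpen[hybridTop A₁ A₂ A₃ A₄] V := by
  rw [hybridTop_eq]
  exact TopologicalSpace.isOpen_generateFrom_of_mem h

lemma hyb_open_union {s s' : Set ℝ} (h : IsOpen[hybridTop A₁ A₂ A₃ A₄] s)
    (h' : IsOpen[hybridTop A₁ A₂ A₃ A₄] s') :
    IsOpen[hybridTop A₁ A₂ A₃ A₄] (s ∪ s') := by
  letI : TopologicalSpace ℝ := hybridTop A₁ A₂ A₃ A₄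
  exact h.union h'

lemma Wm_open (hcov : Is4Cover A₁ A₂ A₃ A₄) (k : ℕ) (z : ℝ) :
    IsOpen[hybridTop A₁ A₂ A₃ A₄] (Wm A₂ k z) := by
  rw [Wm]
  split
  · exact hyb_open_gen (mem_hybGens₂ (by assumption))
  · exact hyb_open_Ioo hcov _ _

lemma Wr_open (hcov : Is4Cover A₁ A₂ A₃ A₄) {C : Set ℝ} (hCsub : C ⊆ A₂ ∪ A₃)
    (hCgap : ∀ w ∉ C, ∃ γ : ℝ, 0 < γ ∧ Ioc (w - γ) w ∩ C = ∅) (k : ℕ) (z : ℝ) :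
    IsOpen[hybridTop A₁ A₂ A₃ A₄] (Wr C k z) := by
  rw [Wr]
  by_cases hz : z ∈ C
  · rw [if_pos hz]
    rcases hCsub hz with h2 | h3
    · have heq : Ico z (gpt k z) = {z} ∪ Ioo z (gpt k z) := by
        ext u
        simp only [mem_Ico, mem_union, mem_singleton_iff, mem_Ioo]
        constructor
        · rintro ⟨h1, h2'⟩
          rcases lt_or_eq_of_le h1 with h | h
          · exact Or.inr ⟨h, h2'⟩
          · exact Or.inl h.symm
        · rintro (rfl | ⟨h1, h2'⟩)
          · exact ⟨le_refl u, lt_gpt k u⟩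
          · exact ⟨le_of_lt h1, h2'⟩
      rw [heq]
      exact hyb_open_union (hyb_open_gen (mem_hybGens₂ h2)) (hyb_open_Ioo hcov _ _)
    · have heq : Ico z (gpt k z) = Ico z (z + (gpt k z - z)) := by congr 1; ring
      rw [heq]
      exact hyb_open_gen (mem_hybGens₃ h3 (by linarith [lt_gpt k z]))
  · rw [if_neg hz]
    apply hyb_open_of_pointwise
    rintro w ⟨hw1, hw2, hw3⟩
    rcases cover_cases hcov w with hA | hA | hA | hA
    · -- w ∈ A₁
      have hwC : w ∉ C := by
        intro hc
        rcases hCsub hc with h | h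
        · exact disjoint_left.mp hcov.2.1 hA h
        · exact disjoint_left.mp hcov.2.2.1 hA h
      obtain ⟨γ, hγ, hγ2⟩ := hCgap w hwC
      by_cases hzw : z < w
      · set ε := min (min (w - gmt k z) (w - z)) (gpt k z - w) with hε
        have hεpos : 0 < ε :=
          lt_min (lt_min (by linarith) (by linarith)) (by linarith)
        have e1 : ε ≤ w - gmt k z := le_trans (min_le_left _ _) (min_le_left _ _)
        have e2 : ε ≤ w - z := le_trans (min_le_left _ _) (min_le_right _ _)
        have e3 : ε ≤ gpt k z - w := min_le_right _ _
        refine ⟨Ioo (w - ε) (w + ε), mem_hybGens₁ hA hεpos,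
          ⟨by linarith, by linarith⟩, ?_⟩
        rintro u ⟨hu1, hu2⟩
        refine ⟨by linarith, by linarith, ?_⟩
        rw [Set.Ioc_eq_empty (by push_neg; linarith), empty_inter]
      · push_neg at hzw
        set ε := min (min γ (w - gmt k z)) (gpt k z - w) with hε
        have hεpos : 0 < ε := lt_min (lt_min hγ (by linarith)) (by linarith)
        have e1 : ε ≤ γ := le_trans (min_le_left _ _) (min_le_left _ _)
        have e2 : ε ≤ w - gmt k z := le_trans (min_le_left _ _) (min_le_right _ _)
        have e3 : ε ≤ gpt k z - w := min_le_right _ _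
        refine ⟨Ioo (w - ε) (w + ε), mem_hybGens₁ hA hεpos,
          ⟨by linarith, by linarith⟩, ?_⟩
        rintro u ⟨hu1, hu2⟩
        have hugpt : u < gpt k z := by linarith
        refine ⟨by linarith, hugpt, ?_⟩
        apply eq_empty_iff_forall_notMem.mpr
        rintro c ⟨⟨hc1, hc2⟩, hcC⟩
        rcases le_or_gt c w with hcw | hcw
        · have hmem : c ∈ Ioc (w - γ) w ∩ C := ⟨⟨by linarith, hcw⟩, hcC⟩
          rw [hγ2] at hmem
          exact hmem
        · have hcu : w < u → c ∈ Ioc w z ∩ C := fun _ => ⟨⟨hcw, hc2⟩, hcC⟩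
          have hmem : c ∈ Ioc w z ∩ C := ⟨⟨hcw, hc2⟩, hcC⟩
          rw [hw3] at hmem
          exact hmem
    · -- w ∈ A₂
      exact ⟨{w}, mem_hybGens₂ hA, rfl,
        singleton_subset_iff.mpr ⟨hw1, hw2, hw3⟩⟩
    · -- w ∈ A₃
      refine ⟨Ico w (w + (gpt k z - w)), mem_hybGens₃ hA (by linarith),
        ⟨le_refl w, by linarith⟩, ?_⟩
      rintro u ⟨hu1, hu2⟩
      refine ⟨by linarith, by linarith, ?_⟩
      apply eq_empty_iff_forall_notMem.mpr
      rintro c ⟨⟨hc1, hc2⟩, hcC⟩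
      have hmem : c ∈ Ioc w z ∩ C := ⟨⟨lt_of_le_of_lt hu1 hc1, hc2⟩, hcC⟩
      rw [hw3] at hmem
      exact hmem
    · -- w ∈ A₄
      have hwC : w ∉ C := by
        intro hc
        rcases hCsub hc with h | h
        · exact disjoint_left.mp hcov.2.2.2.2.2.1 h hA
        · exact disjoint_left.mp hcov.2.2.2.2.2.2 h hA
      obtain ⟨γ, hγ, hγ2⟩ := hCgap w hwC
      by_cases hzw : z < w
      · set ε := min (w - gmt k z) (w - z) with hε
        have hεpos : 0 < ε := lt_min (by linarith) (by linarith)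
        have e1 : ε ≤ w - gmt k z := min_le_left _ _
        have e2 : ε ≤ w - z := min_le_right _ _
        refine ⟨Ioc (w - ε) w, mem_hybGens₄ hA hεpos,
          ⟨by linarith, le_refl w⟩, ?_⟩
        rintro u ⟨hu1, hu2⟩
        refine ⟨by linarith, lt_of_le_of_lt hu2 hw2, ?_⟩
        rw [Set.Ioc_eq_empty (by push_neg; linarith), empty_inter]
      · push_neg at hzw
        set ε := min γ (w - gmt k z) with hε
        have hεpos : 0 < ε := lt_min hγ (by linarith)
        have e1 : ε ≤ γ := min_le_left _ _
        have e2 : ε ≤ w - gmt k z := min_le_right _ _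
        refine ⟨Ioc (w - ε) w, mem_hybGens₄ hA hεpos,
          ⟨by linarith, le_refl w⟩, ?_⟩
        rintro u ⟨hu1, hu2⟩
        refine ⟨by linarith, lt_of_le_of_lt hu2 hw2, ?_⟩
        apply eq_empty_iff_forall_notMem.mpr
        rintro c ⟨⟨hc1, hc2⟩, hcC⟩
        rcases le_or_gt c w with hcw | hcw
        · have hmem : c ∈ Ioc (w - γ) w ∩ C := ⟨⟨by linarith, hcw⟩, hcC⟩
          rw [hγ2] at hmem
          exact hmem
        · have hmem : c ∈ Ioc w z ∩ C := ⟨⟨hcw, hc2⟩, hcC⟩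
          rw [hw3] at hmem
          exact hmem

lemma Wl_open (hcov : Is4Cover A₁ A₂ A₃ A₄) {C : Set ℝ} (hCsub : C ⊆ A₂ ∪ A₄)
    (hCgap : ∀ w ∉ C, ∃ γ : ℝ, 0 < γ ∧ Ico w (w + γ) ∩ C = ∅) (k : ℕ) (z : ℝ) :
    IsOpen[hybridTop A₁ A₂ A₃ A₄] (Wl C k z) := by
  rw [Wl]
  by_cases hz : z ∈ C
  · rw [if_pos hz]
    rcases hCsub hz with h2 | h4
    · have heq : Ioc (gmt k z) z = {z} ∪ Ioo (gmt k z) z := by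
        ext u
        simp only [mem_Ioc, mem_union, mem_singleton_iff, mem_Ioo]
        constructor
        · rintro ⟨h1, h2'⟩
          rcases lt_or_eq_of_le h2' with h | h
          · exact Or.inr ⟨h1, h⟩
          · exact Or.inl h
        · rintro (rfl | ⟨h1, h2'⟩)
          · exact ⟨gmt_lt k u, le_refl u⟩
          · exact ⟨h1, le_of_lt h2'⟩
      rw [heq]
      exact hyb_open_union (hyb_open_gen (mem_hybGens₂ h2)) (hyb_open_Ioo hcov _ _)
    · have heq : Ioc (gmt k z) z = Ioc (z - (z - gmt k z)) z := by congr 1; ring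
      rw [heq]
      exact hyb_open_gen (mem_hybGens₄ h4 (by linarith [gmt_lt k z]))
  · rw [if_neg hz]
    apply hyb_open_of_pointwise
    rintro w ⟨hw1, hw2, hw3⟩
    rcases cover_cases hcov w with hA | hA | hA | hA
    · -- w ∈ A₁
      have hwC : w ∉ C := by
        intro hc
        rcases hCsub hc with h | h
        · exact disjoint_left.mp hcov.2.1 hA h
        · exact disjoint_left.mp hcov.2.2.2.1 hA h
      obtain ⟨γ, hγ, hγ2⟩ := hCgap w hwC
      by_cases hzw : w < z
      · set ε := min (min (gpt k z - w) (z - w)) (w - gmt k z) with hε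
        have hεpos : 0 < ε :=
          lt_min (lt_min (by linarith) (by linarith)) (by linarith)
        have e1 : ε ≤ gpt k z - w := le_trans (min_le_left _ _) (min_le_left _ _)
        have e2 : ε ≤ z - w := le_trans (min_le_left _ _) (min_le_right _ _)
        have e3 : ε ≤ w - gmt k z := min_le_right _ _
        refine ⟨Ioo (w - ε) (w + ε), mem_hybGens₁ hA hεpos,
          ⟨by linarith, by linarith⟩, ?_⟩
        rintro u ⟨hu1, hu2⟩
        refine ⟨by linarith, by linarith, ?_⟩
        rw [Set.Ico_eq_empty (by push_neg; linarith), empty_inter]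
      · push_neg at hzw
        set ε := min (min γ (gpt k z - w)) (w - gmt k z) with hε
        have hεpos : 0 < ε := lt_min (lt_min hγ (by linarith)) (by linarith)
        have e1 : ε ≤ γ := le_trans (min_le_left _ _) (min_le_left _ _)
        have e2 : ε ≤ gpt k z - w := le_trans (min_le_left _ _) (min_le_right _ _)
        have e3 : ε ≤ w - gmt k z := min_le_right _ _
        refine ⟨Ioo (w - ε) (w + ε), mem_hybGens₁ hA hεpos,
          ⟨by linarith, by linarith⟩, ?_⟩
        rintro u ⟨hu1, hu2⟩
        have hugmt : gmt k z < u := by linarith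
        refine ⟨hugmt, by linarith, ?_⟩
        apply eq_empty_iff_forall_notMem.mpr
        rintro c ⟨⟨hc1, hc2⟩, hcC⟩
        rcases le_or_gt w c with hcw | hcw
        · have hmem : c ∈ Ico w (w + γ) ∩ C := ⟨⟨hcw, by linarith⟩, hcC⟩
          rw [hγ2] at hmem
          exact hmem
        · have hmem : c ∈ Ico z w ∩ C := ⟨⟨hc1, hcw⟩, hcC⟩
          rw [hw3] at hmem
          exact hmem
    · -- w ∈ A₂
      exact ⟨{w}, mem_hybGens₂ hA, rfl,
        singleton_subset_iff.mpr ⟨hw1, hw2, hw3⟩⟩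
    · -- w ∈ A₃
      have hwC : w ∉ C := by
        intro hc
        rcases hCsub hc with h | h
        · exact disjoint_left.mp hcov.2.2.2.2.1 h hA
        · exact disjoint_left.mp hcov.2.2.2.2.2.2 hA h
      obtain ⟨γ, hγ, hγ2⟩ := hCgap w hwC
      by_cases hzw : w < z
      · set ε := min (gpt k z - w) (z - w) with hε
        have hεpos : 0 < ε := lt_min (by linarith) (by linarith)
        have e1 : ε ≤ gpt k z - w := min_le_left _ _
        have e2 : ε ≤ z - w := min_le_right _ _
        refine ⟨Ico w (w + ε), mem_hybGens₃ hA hεpos,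
          ⟨le_refl w, by linarith⟩, ?_⟩
        rintro u ⟨hu1, hu2⟩
        refine ⟨lt_of_lt_of_le hw1 hu1, by linarith, ?_⟩
        rw [Set.Ico_eq_empty (by push_neg; linarith), empty_inter]
      · push_neg at hzw
        set ε := min γ (gpt k z - w) with hε
        have hεpos : 0 < ε := lt_min hγ (by linarith)
        have e1 : ε ≤ γ := min_le_left _ _
        have e2 : ε ≤ gpt k z - w := min_le_right _ _
        refine ⟨Ico w (w + ε), mem_hybGens₃ hA hεpos,
          ⟨le_refl w, by linarith⟩, ?_⟩
        rintro u ⟨hu1, hu2⟩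
        refine ⟨lt_of_lt_of_le hw1 hu1, by linarith, ?_⟩
        apply eq_empty_iff_forall_notMem.mpr
        rintro c ⟨⟨hc1, hc2⟩, hcC⟩
        rcases le_or_gt w c with hcw | hcw
        · have hmem : c ∈ Ico w (w + γ) ∩ C := ⟨⟨hcw, by linarith⟩, hcC⟩
          rw [hγ2] at hmem
          exact hmem
        · have hmem : c ∈ Ico z w ∩ C := ⟨⟨hc1, hcw⟩, hcC⟩
          rw [hw3] at hmem
          exact hmem
    · -- w ∈ A₄
      refine ⟨Ioc (w - (w - gmt k z)) w, mem_hybGens₄ hA (by linarith),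
        ⟨by linarith, le_refl w⟩, ?_⟩
      rintro u ⟨hu1, hu2⟩
      refine ⟨by linarith, lt_of_le_of_lt hu2 hw2, ?_⟩
      apply eq_empty_iff_forall_notMem.mpr
      rintro c ⟨⟨hc1, hc2⟩, hcC⟩
      have hmem : c ∈ Ico z w ∩ C := ⟨⟨hc1, lt_of_lt_of_le hc2 hu2⟩, hcC⟩
      rw [hw3] at hmem
      exact hmem

end Openness

/-! ### Assembled neighbornets and direction (3) → (1) -/

noncomputable def TT (A₂ : Set ℝ) (C C' : ℕ → Set ℝ) (k : ℕ) (z : ℝ) : Set ℝ :=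
  ⋂ j ∈ Finset.range (k+1),
    (Wm A₂ j z ∩ ⋂ n ∈ Finset.range (j+1), (Wr (C n) j z ∩ Wl (C' n) j z))

lemma TT_mem {A₂ : Set ℝ} {C C' : ℕ → Set ℝ} {k : ℕ} {z u : ℝ} :
    u ∈ TT A₂ C C' k z ↔ ∀ j ≤ k, u ∈ Wm A₂ j z ∧
      ∀ n ≤ j, u ∈ Wr (C n) j z ∧ u ∈ Wl (C' n) j z := by
  simp only [TT, Set.mem_iInter, Set.mem_inter_iff, Finset.mem_range, Nat.lt_succ_iff]

lemma TT_refl (A₂ : Set ℝ) (C C' : ℕ → Set ℝ) (k : ℕ) (z : ℝ) : z ∈ TT A₂ C C' k z :=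
  TT_mem.mpr (fun j _ => ⟨Wm_refl A₂ j z, fun n _ => ⟨Wr_refl (C n) j z, Wl_refl (C' n) j z⟩⟩)

lemma TT_trans {A₂ : Set ℝ} {C C' : ℕ → Set ℝ} {k : ℕ} {z y : ℝ}
    (hy : y ∈ TT A₂ C C' k z) : TT A₂ C C' k y ⊆ TT A₂ C C' k z := by
  intro u hu
  rw [TT_mem] at hy hu ⊢
  intro j hj
  obtain ⟨hy1, hy2⟩ := hy j hj
  obtain ⟨hu1, hu2⟩ := hu j hj
  exact ⟨Wm_trans hy1 hu1, fun n hn =>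
    ⟨Wr_trans (hy2 n hn).1 (hu2 n hn).1, Wl_trans (hy2 n hn).2 (hu2 n hn).2⟩⟩

lemma TT_anti (A₂ : Set ℝ) (C C' : ℕ → Set ℝ) (k : ℕ) (z : ℝ) :
    TT A₂ C C' (k+1) z ⊆ TT A₂ C C' k z := by
  intro u hu
  rw [TT_mem] at hu ⊢
  intro j hj
  exact hu j (le_trans hj (Nat.le_succ k))

lemma TT_open {A₁ A₂ A₃ A₄ : Set ℝ} (hcov : Is4Cover A₁ A₂ A₃ A₄)
    {C C' : ℕ → Set ℝ}
    (hCsub : ∀ n, C n ⊆ A₂ ∪ A₃)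
    (hCgap : ∀ n, ∀ w ∉ C n, ∃ γ : ℝ, 0 < γ ∧ Ioc (w - γ) w ∩ C n = ∅)
    (hC'sub : ∀ n, C' n ⊆ A₂ ∪ A₄)
    (hC'gap : ∀ n, ∀ w ∉ C' n, ∃ γ : ℝ, 0 < γ ∧ Ico w (w + γ) ∩ C' n = ∅)
    (k : ℕ) (z : ℝ) :
    IsOpen[hybridTop A₁ A₂ A₃ A₄] (TT A₂ C C' k z) := by
  letI : TopologicalSpace ℝ := hybridTop A₁ A₂ A₃ A₄
  apply isOpen_biInter_finset
  intro j _
  refine (Wm_open hcov j z).inter (isOpen_biInter_finset fun n _ => ?_)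
  exact (Wr_open hcov (hCsub n) (hCgap n) j z).inter
    (Wl_open hcov (hC'sub n) (hC'gap n) j z)

lemma half_pow_eq (k : ℕ) : (1/2 : ℝ)^k = 1 / 2^k := by
  rw [div_pow, one_pow]

lemma dir_three_one {A₁ A₂ A₃ A₄ : Set ℝ} (hcov : Is4Cover A₁ A₂ A₃ A₄)
    (hF : ∃ F : ℕ → Set ℝ, (∀ n, F n ⊆ A₃) ∧ A₃ = ⋃ n, F n ∧
        ∀ n, @closure ℝ sorgenfreyLeftTop (F n) ⊆ A₂ ∪ A₃)
    (hH : ∃ H : ℕ → Set ℝ, (∀ n, H n ⊆ A₄) ∧ A₄ = ⋃ n, H n ∧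
        ∀ n, @closure ℝ sorgenfreyTop (H n) ⊆ A₂ ∪ A₄) :
    NAQuasiMetrizableTop (hybridTop A₁ A₂ A₃ A₄) := by
  obtain ⟨F, hF1, hF2, hF3⟩ := hF
  obtain ⟨H, hH1, hH2, hH3⟩ := hH
  have hCgap : ∀ n, ∀ w ∉ @closure ℝ sorgenfreyLeftTop (F n),
      ∃ γ : ℝ, 0 < γ ∧ Ioc (w - γ) w ∩ @closure ℝ sorgenfreyLeftTop (F n) = ∅ :=
    fun n w hw => sleft_gap hw
  have hC'gap : ∀ n, ∀ w ∉ @closure ℝ sorgenfreyTop (H n),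
      ∃ γ : ℝ, 0 < γ ∧ Ico w (w + γ) ∩ @closure ℝ sorgenfreyTop (H n) = ∅ :=
    fun n w hw => sright_gap hw
  set C : ℕ → Set ℝ := fun n => @closure ℝ sorgenfreyLeftTop (F n) with hC
  set C' : ℕ → Set ℝ := fun n => @closure ℝ sorgenfreyTop (H n) with hC'
  have hhalf : ∀ {j k : ℕ}, j ≤ k → (1/2:ℝ)^k ≤ (1/2:ℝ)^j :=
    fun hjk => pow_le_pow_of_le_one (by norm_num) (by norm_num) hjk
  have hsep : ∀ x y : ℝ, x ≠ y → ∃ k, y ∉ TT A₂ C C' k x := by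
    intro x y hxy
    have habs : (0:ℝ) < |y - x| := abs_pos.mpr (sub_ne_zero.mpr (Ne.symm hxy))
    obtain ⟨k, hk⟩ := exists_pow_lt_of_lt_one habs (by norm_num : (1/2:ℝ) < 1)
    refine ⟨k, fun hy => ?_⟩
    have hWm : y ∈ Wm A₂ k x := (TT_mem.mp hy k le_rfl).1
    have hsm := Wm_small hWm
    have h1 : |y - x| < 1/2^k :=
      abs_lt.mpr ⟨by linarith [hsm.1], by linarith [hsm.2]⟩
    rw [← half_pow_eq] at h1
    linarith
  have hbase : ∀ (x : ℝ) (U : Set ℝ), IsOpen[hybridTop A₁ A₂ A₃ A₄] U → x ∈ U →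
      ∃ k, TT A₂ C C' k x ⊆ U := by
    intro x U hU hx
    obtain ⟨ε, hε, c1, c3, c4⟩ := hyb_nbhd hcov hU x hx
    obtain ⟨k₀, hk₀⟩ := exists_pow_lt_of_lt_one hε (by norm_num : (1/2:ℝ) < 1)
    rcases cover_cases hcov x with hA | hA | hA | hA
    · refine ⟨k₀, fun u hu => ?_⟩
      have hsm := Wm_small ((TT_mem.mp hu k₀ le_rfl).1)
      have hpe := half_pow_eq k₀
      exact c1 hA ⟨by linarith [hsm.1], by linarith [hsm.2]⟩
    · refine ⟨0, fun u hu => ?_⟩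
      have hWm : u ∈ Wm A₂ 0 x := (TT_mem.mp hu 0 le_rfl).1
      rw [Wm, if_pos hA, mem_singleton_iff] at hWm
      subst hWm
      exact hx
    · have hxm : ∃ m, x ∈ F m := by
        have := hF2 ▸ hA
        exact mem_iUnion.mp this
      obtain ⟨m, hm⟩ := hxm
      have hxCl : x ∈ C m := by
        rw [hC]
        letI : TopologicalSpace ℝ := sorgenfreyLeftTop
        exact subset_closure hm
      refine ⟨max m k₀, fun u hu => ?_⟩
      have hWr : u ∈ Wr (C m) (max m k₀) x :=
        ((TT_mem.mp hu (max m k₀) le_rfl).2 m (le_max_left _ _)).1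
      rw [Wr, if_pos hxCl] at hWr
      apply c3 hA
      refine ⟨hWr.1, ?_⟩
      have h1 : gpt (max m k₀) x ≤ x + 1/2^(max m k₀) := gpt_le _ _
      have h2 : (1/2:ℝ)^(max m k₀) ≤ (1/2:ℝ)^k₀ := hhalf (le_max_right _ _)
      have h3 := half_pow_eq (max m k₀)
      linarith [hWr.2]
    · have hxm : ∃ m, x ∈ H m := by
        have := hH2 ▸ hA
        exact mem_iUnion.mp this
      obtain ⟨m, hm⟩ := hxm
      have hxCl : x ∈ C' m := by
        rw [hC']
        letI : TopologicalSpace ℝ := sorgenfreyTop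
        exact subset_closure hm
      refine ⟨max m k₀, fun u hu => ?_⟩
      have hWl : u ∈ Wl (C' m) (max m k₀) x :=
        ((TT_mem.mp hu (max m k₀) le_rfl).2 m (le_max_left _ _)).2
      rw [Wl, if_pos hxCl] at hWl
      apply c4 hA
      refine ⟨?_, hWl.2⟩
      have h1 : x - 1/2^(max m k₀) ≤ gmt (max m k₀) x := gmt_ge _ _
      have h2 : (1/2:ℝ)^(max m k₀) ≤ (1/2:ℝ)^k₀ := hhalf (le_max_right _ _)
      have h3 := half_pow_eq (max m k₀)
      linarith [hWl.1]
  obtain ⟨ρ, hρ, heq⟩ := na_of_neighbornets (hybridTop A₁ A₂ A₃ A₄) (TT A₂ C C')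
    (TT_refl A₂ C C')
    (fun k x y hy => TT_trans hy)
    (TT_anti A₂ C C')
    hsep
    (fun k x => TT_open hcov hF3 hCgap hH3 hC'gap k x)
    hbase
  exact ⟨ρ, hρ, heq⟩


/-- **Corollary 2.9.** For any 4-cover `𝒜` of ℝ, the following are equivalent:
(1) `H₄(𝒜)` is non-archimedeanly quasi-metrizable; (2) `H₄(𝒜)` is quasi-metrizable;
(3) `A₃` is a countable union of sets whose `𝕊←`-closures lie in `A₂ ∪ A₃`, and
`A₄` is a countable union of sets whose `𝕊`-closures lie in `A₂ ∪ A₄`. -/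
theorem hybrid_quasiMetrizable_tfae
    (A₁ A₂ A₃ A₄ : Set ℝ) (hcov : Is4Cover A₁ A₂ A₃ A₄) :
    List.TFAE
      [NAQuasiMetrizableTop (hybridTop A₁ A₂ A₃ A₄),
       QuasiMetrizableTop (hybridTop A₁ A₂ A₃ A₄),
       (∃ F : ℕ → Set ℝ, (∀ n, F n ⊆ A₃) ∧ A₃ = ⋃ n, F n ∧
          ∀ n, @closure ℝ sorgenfreyLeftTop (F n) ⊆ A₂ ∪ A₃) ∧
       (∃ H : ℕ → Set ℝ, (∀ n, H n ⊆ A₄) ∧ A₄ = ⋃ n, H n ∧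
          ∀ n, @closure ℝ sorgenfreyTop (H n) ⊆ A₂ ∪ A₄)] := by
  tfae_have 1 → 2 := fun ⟨ρ, hρ, hq⟩ => ⟨ρ, hρ.1, hq⟩
  tfae_have 2 → 3 := fun h => dir_two_three hcov h
  tfae_have 3 → 1 := fun h => dir_three_one hcov h.1 h.2
  tfae_finish
end

section
/- If a subset F of ℝ is closed in the Sorgenfrey line 𝕊 or closed in 𝕊←, then F is of type G_δ in ℝ with the standard euclidean topology, i.e. F is a countable intersection of euclidean-open subsets of ℝ. -/
open Set

/-- Sorgenfrey-open sets contain a right half-open interval around each point. -/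
lemma sorgenfrey_open_ico (U : Set ℝ) (h : @IsOpen ℝ sorgenfreyTop U) :
    ∀ x ∈ U, ∃ ε > 0, Ico x (x + ε) ⊆ U := by
  have h' : TopologicalSpace.GenerateOpen {S : Set ℝ | ∃ a b : ℝ, S = Set.Ico a b} U := h
  induction h' with
  | basic S hS =>
    obtain ⟨a, b, rfl⟩ := hS
    intro x hx
    exact ⟨b - x, by linarith [hx.1, hx.2], by
      intro y hy
      exact ⟨le_trans hx.1 hy.1, by linarith [hy.2]⟩⟩
  | univ => intro x _; exact ⟨1, one_pos, fun y _ => trivial⟩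
  | inter S T hS hT ihS ihT =>
    intro x hx
    obtain ⟨ε₁, hε₁, h₁⟩ := ihS hS x hx.1
    obtain ⟨ε₂, hε₂, h₂⟩ := ihT hT x hx.2
    refine ⟨min ε₁ ε₂, lt_min hε₁ hε₂, fun y hy => ⟨h₁ ⟨hy.1, ?_⟩, h₂ ⟨hy.1, ?_⟩⟩⟩
    · exact lt_of_lt_of_le hy.2 (by linarith [min_le_left ε₁ ε₂])
    · exact lt_of_lt_of_le hy.2 (by linarith [min_le_right ε₁ ε₂])
  | sUnion S hS ih =>
    intro x hx
    obtain ⟨T, hT, hxT⟩ := hx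
    obtain ⟨ε, hε, hsub⟩ := ih T hT (hS T hT) x hxT
    exact ⟨ε, hε, fun y hy => ⟨T, hT, hsub hy⟩⟩

/-- Left-Sorgenfrey-open sets contain a left half-open interval around each point. -/
lemma sorgenfreyLeft_open_ioc (U : Set ℝ) (h : @IsOpen ℝ sorgenfreyLeftTop U) :
    ∀ x ∈ U, ∃ ε > 0, Ioc (x - ε) x ⊆ U := by
  have h' : TopologicalSpace.GenerateOpen {S : Set ℝ | ∃ a b : ℝ, S = Set.Ioc a b} U := h
  induction h' with
  | basic S hS =>
    obtain ⟨a, b, rfl⟩ := hS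
    intro x hx
    exact ⟨x - a, by linarith [hx.1, hx.2], by
      intro y hy
      exact ⟨by linarith [hy.1], le_trans hy.2 hx.2⟩⟩
  | univ => intro x _; exact ⟨1, one_pos, fun y _ => trivial⟩
  | inter S T hS hT ihS ihT =>
    intro x hx
    obtain ⟨ε₁, hε₁, h₁⟩ := ihS hS x hx.1
    obtain ⟨ε₂, hε₂, h₂⟩ := ihT hT x hx.2
    refine ⟨min ε₁ ε₂, lt_min hε₁ hε₂, fun y hy => ⟨h₁ ⟨?_, hy.2⟩, h₂ ⟨?_, hy.2⟩⟩⟩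
    · exact lt_of_le_of_lt (by linarith [min_le_left ε₁ ε₂] : x - ε₁ ≤ x - min ε₁ ε₂) hy.1
    · exact lt_of_le_of_lt (by linarith [min_le_right ε₁ ε₂] : x - ε₂ ≤ x - min ε₁ ε₂) hy.1
  | sUnion S hS ih =>
    intro x hx
    obtain ⟨T, hT, hxT⟩ := hx
    obtain ⟨ε, hε, hsub⟩ := ih T hT (hS T hT) x hxT
    exact ⟨ε, hε, fun y hy => ⟨T, hT, hsub hy⟩⟩

/-- Key step: if every point of `U` has a right half-open interval inside `U`,
then `Uᶜ` is euclidean-Gδ. -/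
lemma isGδ_compl_of_ico (U : Set ℝ) (hU : ∀ x ∈ U, ∃ ε > 0, Ico x (x + ε) ⊆ U) :
    IsGδ Uᶜ := by
  classical
  set D : Set ℝ := U \ interior U with hD
  have hq : ∀ x ∈ D, ∃ q : ℚ, x < (q : ℝ) ∧ Ioo x (q : ℝ) ⊆ U := by
    intro x hx
    obtain ⟨ε, hε, hsub⟩ := hU x hx.1
    obtain ⟨q, hq1, hq2⟩ := exists_rat_btwn (show x < x + ε by linarith)
    exact ⟨q, hq1, fun y hy => hsub ⟨le_of_lt hy.1, lt_trans hy.2 hq2⟩⟩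
  choose! f hf1 hf2 using hq
  have key : ∀ x ∈ D, ∀ y ∈ D, x < y → f x ≠ f y := by
    intro x hx y hy hlt heq
    have h1 : y < (f x : ℝ) := by rw [heq]; exact hf1 y hy
    exact hy.2 (mem_interior.mpr ⟨Ioo x ((f x : ℝ)), hf2 x hx, isOpen_Ioo, ⟨hlt, h1⟩⟩)
  have hDc : D.Countable := by
    rw [← Set.countable_coe_iff]
    refine Function.Injective.countable (f := fun x : D => f x) ?_
    rintro ⟨x, hx⟩ ⟨y, hy⟩ hxy
    simp only [Subtype.mk.injEq]
    by_contra hne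
    rcases lt_or_gt_of_ne hne with hlt | hlt
    · exact key x hx y hy hlt hxy
    · exact key y hy x hx hlt hxy.symm
  have hsplit : Uᶜ = (interior U)ᶜ ∩ Dᶜ := by
    ext x
    simp only [mem_compl_iff, mem_inter_iff, hD, mem_diff, not_and, not_not]
    constructor
    · intro hx
      exact ⟨fun h => hx (interior_subset h), fun h => absurd h hx⟩
    · rintro ⟨h1, h2⟩ hx
      exact h1 (h2 hx)
  rw [hsplit]
  exact (isOpen_interior.isClosed_compl.isGδ).inter hDc.isGδ_compl

/-- Same, for left half-open intervals. -/
lemma isGδ_compl_of_ioc (U : Set ℝ) (hU : ∀ x ∈ U, ∃ ε > 0, Ioc (x - ε) x ⊆ U) :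
    IsGδ Uᶜ := by
  classical
  set D : Set ℝ := U \ interior U with hD
  have hq : ∀ x ∈ D, ∃ q : ℚ, (q : ℝ) < x ∧ Ioo (q : ℝ) x ⊆ U := by
    intro x hx
    obtain ⟨ε, hε, hsub⟩ := hU x hx.1
    obtain ⟨q, hq1, hq2⟩ := exists_rat_btwn (show x - ε < x by linarith)
    exact ⟨q, hq2, fun y hy => hsub ⟨lt_trans hq1 hy.1, le_of_lt hy.2⟩⟩
  choose! f hf1 hf2 using hq
  have key : ∀ x ∈ D, ∀ y ∈ D, x < y → f x ≠ f y := by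
    intro x hx y hy hlt heq
    have h1 : (f y : ℝ) < x := by rw [← heq]; exact hf1 x hx
    exact hx.2 (mem_interior.mpr ⟨Ioo ((f y : ℝ)) y, hf2 y hy, isOpen_Ioo, ⟨h1, hlt⟩⟩)
  have hDc : D.Countable := by
    rw [← Set.countable_coe_iff]
    refine Function.Injective.countable (f := fun x : D => f x) ?_
    rintro ⟨x, hx⟩ ⟨y, hy⟩ hxy
    simp only [Subtype.mk.injEq]
    by_contra hne
    rcases lt_or_gt_of_ne hne with hlt | hlt
    · exact key x hx y hy hlt hxy
    · exact key y hy x hx hlt hxy.symm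
  have hsplit : Uᶜ = (interior U)ᶜ ∩ Dᶜ := by
    ext x
    simp only [mem_compl_iff, mem_inter_iff, hD, mem_diff, not_and, not_not]
    constructor
    · intro hx
      exact ⟨fun h => hx (interior_subset h), fun h => absurd h hx⟩
    · rintro ⟨h1, h2⟩ hx
      exact h1 (h2 hx)
  rw [hsplit]
  exact (isOpen_interior.isClosed_compl.isGδ).inter hDc.isGδ_compl

/-- **Lemma 2.12.** A subset of ℝ closed in `𝕊` or in `𝕊←` is of type `G_δ`
in the euclidean topology. -/
theorem Gdelta_of_sorgenfrey_closed (F : Set ℝ)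
    (h : @IsClosed ℝ sorgenfreyTop F ∨ @IsClosed ℝ sorgenfreyLeftTop F) :
    ∃ G : ℕ → Set ℝ, (∀ n, IsOpen (G n)) ∧ F = ⋂ n, G n := by
  have hGδ : IsGδ F := by
    rcases h with h | h
    · have hopen : @IsOpen ℝ sorgenfreyTop Fᶜ := @IsClosed.isOpen_compl ℝ sorgenfreyTop F h
      have := isGδ_compl_of_ico Fᶜ (sorgenfrey_open_ico Fᶜ hopen)
      rwa [compl_compl] at this
    · have hopen : @IsOpen ℝ sorgenfreyLeftTop Fᶜ :=
        @IsClosed.isOpen_compl ℝ sorgenfreyLeftTop F h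
      have := isGδ_compl_of_ioc Fᶜ (sorgenfreyLeft_open_ioc Fᶜ hopen)
      rwa [compl_compl] at this
  exact isGδ_iff_eq_iInter_nat.mp hGδ
end

section
/- If a subset F of ℝ is closed in 𝕊←, then the set cl_ℝ(F) \ F, where cl_ℝ(F) is the closure of F in the standard euclidean topology on ℝ, is countable. -/
open Set

/-- If `F ⊆ ℝ` is closed in `𝕊←`, then `cl_ℝ(F) \ F` is countable, where the closure
is taken in the euclidean topology. -/
theorem countable_closure_diff_of_sorgenfreyLeft_closed (F : Set ℝ)
    (h : @IsClosed ℝ sorgenfreyLeftTop F) :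
    (closure F \ F).Countable := by
  classical
  have hopen : @IsOpen ℝ sorgenfreyLeftTop Fᶜ := by
    rw [← @isClosed_compl_iff ℝ sorgenfreyLeftTop, compl_compl]; exact h
  -- key: every point of a sorgenfreyLeft-open set has a left half-open nbhd inside it
  have key : ∀ x ∈ Fᶜ, ∃ a, a < x ∧ Ioc a x ⊆ Fᶜ := by
    have gen : ∀ U : Set ℝ,
        TopologicalSpace.GenerateOpen {S : Set ℝ | ∃ a b : ℝ, S = Set.Ioc a b} U →
        ∀ x ∈ U, ∃ a, a < x ∧ Ioc a x ⊆ U := by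
      intro U hU
      induction hU with
      | basic S hS =>
        rintro x hx
        obtain ⟨a, b, rfl⟩ := hS
        exact ⟨a, hx.1, fun y hy => ⟨hy.1, hy.2.trans hx.2⟩⟩
      | univ => intro x _; exact ⟨x - 1, by linarith, fun _ _ => trivial⟩
      | inter S T hS hT ihS ihT =>
        intro x hx
        obtain ⟨a, ha, hSa⟩ := ihS x hx.1
        obtain ⟨b, hb, hTb⟩ := ihT x hx.2
        refine ⟨max a b, max_lt ha hb, fun y hy => ⟨?_, ?_⟩⟩
        · exact hSa ⟨(le_max_left a b).trans_lt hy.1, hy.2⟩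
        · exact hTb ⟨(le_max_right a b).trans_lt hy.1, hy.2⟩
      | sUnion S hS ih =>
        rintro x ⟨T, hT, hxT⟩
        obtain ⟨a, ha, hsub⟩ := ih T hT x hxT
        exact ⟨a, ha, fun y hy => ⟨T, hT, hsub hy⟩⟩
    exact gen Fᶜ hopen
  choose! a ha hsub using key
  -- pick a rational in (a x, x)
  have hq : ∀ x ∈ Fᶜ, ∃ q : ℚ, a x < (q : ℝ) ∧ (q : ℝ) < x := by
    intro x hx; exact exists_rat_btwn (ha x hx)
  choose! q hq1 hq2 using hq
  set D := closure F \ F with hDdef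
  have hDc : ∀ x ∈ D, x ∈ Fᶜ := fun x hx => hx.2
  -- strict monotonicity of q on D
  have mono : ∀ x ∈ D, ∀ y ∈ D, x < y → q x < q y := by
    intro x hxD y hyD hxy
    have hx := hDc x hxD
    have hy := hDc y hyD
    have hε : (0:ℝ) < min (y - x) (x - a x) := by
      have := ha x hx
      exact lt_min (by linarith) (by linarith)
    obtain ⟨f, hfF, hdist⟩ := Metric.mem_closure_iff.mp hxD.1 _ hε
    have hd : |x - f| < min (y - x) (x - a x) := by
      simpa [Real.dist_eq] using hdist
    have h1 : x - f < x - a x := lt_of_lt_of_le (lt_of_abs_lt hd) (min_le_right _ _)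
    have h2 : f - x < y - x := lt_of_lt_of_le (lt_of_abs_lt (by rwa [abs_sub_comm])) (min_le_left _ _)
    have hfa : a x < f := by linarith
    have hfx : x < f := by
      by_contra hle
      push_neg at hle
      exact (hsub x hx ⟨hfa, hle⟩) hfF
    have hfy : f < y := by linarith
    -- f ∈ F, f ≤ y, so f ≤ a y (else f ∈ Ioc (a y) y ⊆ Fᶜ)
    have hfay : f ≤ a y := by
      by_contra hgt
      push_neg at hgt
      exact (hsub y hy ⟨hgt, hfy.le⟩) hfF
    have : (q x : ℝ) < q y := by
      have := hq2 x hx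
      have := hq1 y hy
      have := hq2 y hy
      linarith
    exact_mod_cast this
  -- injectivity and countability
  have hinj : InjOn (fun x => q x) D := by
    intro x hx y hy hqe
    rcases lt_trichotomy x y with hlt | heq | hgt
    · exact absurd hqe (ne_of_lt (mono x hx y hy hlt))
    · exact heq
    · exact absurd hqe.symm (ne_of_lt (mono y hy x hx hgt))
  exact Set.countable_iff_exists_injOn.mpr
    ⟨fun x => Encodable.encode (q x), fun x hx y hy hxy =>
      hinj hx hy (Encodable.encode_injective hxy)⟩
end
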